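/- arXiv:math/0410598 — 5 statements merged into one kernel-verified Lean document; each statement's English description precedes it below -/
import Mathlib

section
/- If 0 → L → M → N → 0 is a short exact sequence of R-modules over a commutative Noetherian ring R, then M is weakly Laskerian if and only if both L and N are weakly Laskerian. -/
/-- An `R`-module `M` is weakly Laskerian if every quotient of `M`
has finitely many associated primes. -/
def WeaklyLaskerian (R M : Type*) [CommRing R] [AddCommGroup M] [Module R M] : Prop :=
  ∀ N : Submodule R M, (associatedPrimes R (M ⧸ N)).Finite

/-! Every quotient of `L` embeds into a quotient of `M`, and every quotient of `N` is a quotient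
of `M`; so weak Laskerianity passes from `M` to `L` and `N`. Conversely, for `P ≤ M` the sequence
`0 → L ⧸ f⁻¹(P) → M ⧸ P → N ⧸ g(P)` is still exact, and the associated primes of its middle term
lie in the union of those of its ends. -/

open Function Submodule

theorem Submodule.mapQ_injective {R M M₂ : Type*} [Ring R] [AddCommGroup M] [Module R M]
    [AddCommGroup M₂] [Module R M₂] {p : Submodule R M} {q : Submodule R M₂} (f : M →ₗ[R] M₂)
    (h : p ≤ q.comap f) (hqp : q.comap f ≤ p) : Injective (p.mapQ q f h) := by
  rw [← LinearMap.ker_eq_bot, ker_mapQ, eq_bot_iff, map_le_iff_le_comap]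
  exact hqp.trans_eq p.ker_mkQ.symm

theorem Submodule.mapQ_surjective {R M M₂ : Type*} [Ring R] [AddCommGroup M] [Module R M]
    [AddCommGroup M₂] [Module R M₂] {p : Submodule R M} {q : Submodule R M₂} {f : M →ₗ[R] M₂}
    (h : p ≤ q.comap f) (hf : Surjective f) : Surjective (p.mapQ q f h) := by
  rw [← LinearMap.range_eq_top, range_mapQ, LinearMap.range_eq_top.2 hf, map_top, range_mkQ]

namespace WeaklyLaskerian

variable {R L M N : Type*} [CommRing R] [AddCommGroup L] [Module R L] [AddCommGroup M]
  [Module R M] [AddCommGroup N] [Module R N]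

theorem of_injective (hM : WeaklyLaskerian R M) {f : L →ₗ[R] M} (hf : Injective f) :
    WeaklyLaskerian R L := fun P =>
  (hM (P.map f)).subset <| associatedPrimes.subset_of_injective <|
    mapQ_injective f (le_comap_map f P) (comap_map_eq_of_injective hf P).le

theorem of_surjective (hM : WeaklyLaskerian R M) {g : M →ₗ[R] N} (hg : Surjective g) :
    WeaklyLaskerian R N := fun Q => by
  let e := LinearEquiv.ofBijective (mapQ (Q.comap g) Q g le_rfl)
    ⟨mapQ_injective g le_rfl le_rfl, mapQ_surjective le_rfl hg⟩
  rw [← LinearEquiv.AssociatedPrimes.eq e]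
  exact hM _

theorem of_exact (hL : WeaklyLaskerian R L) (hN : WeaklyLaskerian R N) {f : L →ₗ[R] M}
    {g : M →ₗ[R] N} (hfg : Exact f g) : WeaklyLaskerian R M := fun P =>
  ((hL (P.comap f)).union (hN (P.map g))).subset <|
    associatedPrimes.subset_union_of_exact (mapQ_injective f le_rfl le_rfl)
      ((hfg.exact_mapQ_iff le_rfl (le_comap_map g P)).2 inf_le_right)

end WeaklyLaskerian

theorem weaklyLaskerian_of_shortExact_general
    {R L M N : Type*} [CommRing R]
    [AddCommGroup L] [Module R L] [AddCommGroup M] [Module R M]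
    [AddCommGroup N] [Module R N]
    (f : L →ₗ[R] M) (g : M →ₗ[R] N)
    (hf : Function.Injective f) (hg : Function.Surjective g)
    (hfg : Function.Exact f g) :
    WeaklyLaskerian R M ↔ WeaklyLaskerian R L ∧ WeaklyLaskerian R N :=
  ⟨fun hM => ⟨hM.of_injective hf, hM.of_surjective hg⟩,
    fun ⟨hL, hN⟩ => .of_exact hL hN hfg⟩

theorem weaklyLaskerian_of_shortExact
    {R L M N : Type*} [CommRing R] [IsNoetherianRing R]
    [AddCommGroup L] [Module R L] [AddCommGroup M] [Module R M]
    [AddCommGroup N] [Module R N]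
    (f : L →ₗ[R] M) (g : M →ₗ[R] N)
    (hf : Function.Injective f) (hg : Function.Surjective g)
    (hfg : Function.Exact f g) :
    WeaklyLaskerian R M ↔ WeaklyLaskerian R L ∧ WeaklyLaskerian R N :=
  weaklyLaskerian_of_shortExact_general f g hf hg hfg
end

section
/- If M is a weakly Laskerian R-module and N is a finitely generated R-module, then Tor^R_i(N, M) is weakly Laskerian for all i ≥ 0. -/
open CategoryTheory

/-!
Weakly Laskerian modules are closed under submodules, quotients and extensions (the
associated primes of a module lie in those of a submodule and of the quotient by it), hence
under finite direct sums; so `N ⊗ M`, a quotient of `Mⁿ`, is weakly Laskerian, which is the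
case `i = 0`.
For the induction step choose `0 → K → F → N → 0` with `F` finite free; `K` is finite since `R`
is Noetherian, and the connecting map `Tor_{i+1}(N, M) → Tor_i(K, M)` is injective because
`Tor_{i+1}(F, M) = 0`.
-/

open scoped TensorProduct

namespace WeaklyLaskerian

variable {R X Y : Type*} [CommRing R] [AddCommGroup X] [Module R X] [AddCommGroup Y] [Module R Y]

theorem finite_associatedPrimes_of_surjective (hX : WeaklyLaskerian R X) {f : X →ₗ[R] Y}
    (hf : Function.Surjective f) : (associatedPrimes R Y).Finite := by
  rw [LinearEquiv.AssociatedPrimes.eq (f.quotKerEquivOfSurjective hf).symm]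
  exact hX _

theorem of_surjective_s4 (hX : WeaklyLaskerian R X) (f : X →ₗ[R] Y) (hf : Function.Surjective f) :
    WeaklyLaskerian R Y := fun N =>
  hX.finite_associatedPrimes_of_surjective (f := N.mkQ ∘ₗ f) (N.mkQ_surjective.comp hf)

theorem of_equiv (hX : WeaklyLaskerian R X) (e : X ≃ₗ[R] Y) : WeaklyLaskerian R Y :=
  hX.of_surjective_s4 e e.surjective

theorem of_injective_s4 (hY : WeaklyLaskerian R Y) (f : X →ₗ[R] Y) (hf : Function.Injective f) :
    WeaklyLaskerian R X := by
  intro N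
  let g := (N.map f).mkQ ∘ₗ f
  have hker : LinearMap.ker g = N := by
    rw [LinearMap.ker_comp, Submodule.ker_mkQ, Submodule.comap_map_eq_of_injective hf]
  rw [LinearEquiv.AssociatedPrimes.eq ((Submodule.quotEquivOfEq _ _ hker.symm).trans
    g.quotKerEquivRange)]
  exact (hY _).subset (associatedPrimes.subset_of_injective (Submodule.injective_subtype _))

theorem of_submodule_of_quotient (S : Submodule R Y) (hS : WeaklyLaskerian R S)
    (hQ : WeaklyLaskerian R (Y ⧸ S)) : WeaklyLaskerian R Y := by
  intro N
  let T := S.map N.mkQ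
  have hT : (associatedPrimes R T).Finite :=
    hS.finite_associatedPrimes_of_surjective (N.mkQ.submoduleMap_surjective S)
  have hQT : (associatedPrimes R ((Y ⧸ N) ⧸ T)).Finite := by
    refine hQ.finite_associatedPrimes_of_surjective (f := S.mapQ T N.mkQ (S.le_comap_map _)) ?_
    refine .of_comp (g := S.mkQ) ?_
    rw [← LinearMap.coe_comp, Submodule.mapQ_mkQ, LinearMap.coe_comp]
    exact T.mkQ_surjective.comp N.mkQ_surjective
  exact (hT.union hQT).subset
    (associatedPrimes.subset_union_of_exact T.injective_subtype (LinearMap.exact_subtype_mkQ T))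

theorem prod (hX : WeaklyLaskerian R X) (hY : WeaklyLaskerian R Y) :
    WeaklyLaskerian R (X × Y) :=
  of_submodule_of_quotient (LinearMap.range (LinearMap.inl R X Y))
    (hX.of_surjective_s4 _ (LinearMap.inl R X Y).surjective_rangeRestrict)
    (hY.of_equiv ((Submodule.quotEquivOfEq _ _ (LinearMap.ker_snd R X Y).symm).trans
      ((LinearMap.snd R X Y).quotKerEquivOfSurjective LinearMap.snd_surjective)).symm)

theorem of_subsingleton [Subsingleton X] : WeaklyLaskerian R X := fun _ => by
  simp [associatedPrimes.eq_empty_of_subsingleton]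

theorem pi (hX : WeaklyLaskerian R X) : ∀ n : ℕ, WeaklyLaskerian R (Fin n → X)
  | 0 => of_subsingleton
  | n + 1 => (hX.prod (pi hX n)).of_equiv (Fin.consLinearEquiv R fun _ => X)

theorem tensorProduct (hX : WeaklyLaskerian R X) (N : Type*) [AddCommGroup N] [Module R N]
    [Module.Finite R N] : WeaklyLaskerian R (N ⊗[R] X) := by
  obtain ⟨n, f, hf⟩ := Module.Finite.exists_fin' R N
  have hfree : WeaklyLaskerian R ((Fin n → R) ⊗[R] X) :=
    (hX.pi n).of_equiv ((TensorProduct.piScalarRight R R X (Fin n)).symm.trans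
      (TensorProduct.comm R _ _))
  exact hfree.of_surjective_s4 (f.rTensor X) (LinearMap.rTensor_surjective X hf)

end WeaklyLaskerian

universe u

open Limits MonoidalCategory

namespace CategoryTheory.ShortComplex

variable {C : Type*} [Category C] [Preadditive C] [MonoidalCategory C] [MonoidalPreadditive C]
  {ι : Type*} {c : ComplexShape ι}

def tensorComplex (S : ShortComplex C) (K : HomologicalComplex C c) :
    ShortComplex (HomologicalComplex C c) where
  f := (NatTrans.mapHomologicalComplex ((tensoringLeft C).map S.f) c).app K
  g := (NatTrans.mapHomologicalComplex ((tensoringLeft C).map S.g) c).app K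
  zero := by
    ext n : 1
    change S.f ▷ K.X n ≫ S.g ▷ K.X n = 0
    rw [← comp_whiskerRight, S.zero, MonoidalPreadditive.zero_whiskerRight]

theorem ShortExact.tensorComplex {R : Type u} [CommRing R] {S : ShortComplex (ModuleCat.{u} R)}
    (hS : S.ShortExact) (K : HomologicalComplex (ModuleCat.{u} R) c)
    [∀ i, Module.Flat R (K.X i)] : (S.tensorComplex K).ShortExact :=
  HomologicalComplex.shortExact_of_degreewise_shortExact _ fun i =>
    hS.map_of_exact (tensorRight (K.X i))

end CategoryTheory.ShortComplex

section Tor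

variable {R : Type u} [CommRing R]

theorem exactAt_tensorLeft_of_flat {ι : Type*} {c : ComplexShape ι} (X : ModuleCat.{u} R)
    [Module.Flat R X] {K : HomologicalComplex (ModuleCat.{u} R) c} {i : ι} (hK : K.ExactAt i) :
    ((((tensoringLeft _).obj X).mapHomologicalComplex c).obj K).ExactAt i := by
  rw [HomologicalComplex.exactAt_iff] at hK ⊢
  exact Module.Flat.lTensor_shortComplex_exact X (K.sc i) hK

theorem isZero_Tor_succ_of_flat (X : ModuleCat.{u} R) [Module.Flat R X] (Y : ModuleCat.{u} R)
    (n : ℕ) : IsZero (((Tor (ModuleCat.{u} R) (n + 1)).obj X).obj Y) :=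
  let P := projectiveResolution Y
  ((exactAt_tensorLeft_of_flat X (P.complex_exactAt_succ n)).isZero_homology).of_iso
    (P.isoLeftDerivedObj _ (n + 1))

/-- `Tor` is derived in its second variable, so the connecting map in the first one is taken
from the homology sequence of `S ⊗ P` for a projective resolution `P` of `M`. -/
theorem exists_injective_Tor_succ_of_flat {S : ShortComplex (ModuleCat.{u} R)}
    (hS : S.ShortExact) [Module.Flat R S.X₂] (M : ModuleCat.{u} R) (n : ℕ) :
    ∃ f : ((Tor (ModuleCat.{u} R) (n + 1)).obj S.X₃).obj M →ₗ[R]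
      ((Tor (ModuleCat.{u} R) n).obj S.X₁).obj M, Function.Injective f := by
  let P := projectiveResolution M
  have hσ := hS.tensorComplex P.complex
  have hn : (ComplexShape.down ℕ).Rel (n + 1) n := rfl
  have hF := (isZero_Tor_succ_of_flat S.X₂ M n).of_iso (P.isoLeftDerivedObj _ (n + 1)).symm
  have hδ : Mono (hσ.δ (n + 1) n hn) :=
    (hσ.homology_exact₃ (n + 1) n hn).mono_g (hF.eq_of_src _ _)
  let e₁ := P.isoLeftDerivedObj ((tensoringLeft _).obj S.X₃) (n + 1)
  let e₀ := P.isoLeftDerivedObj ((tensoringLeft _).obj S.X₁) n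
  refine ⟨e₀.toLinearEquiv.symm.toLinearMap ∘ₗ (hσ.δ (n + 1) n hn).hom ∘ₗ
    e₁.toLinearEquiv.toLinearMap, ?_⟩
  exact e₀.toLinearEquiv.symm.injective.comp
    (((ModuleCat.mono_iff_injective _).1 hδ).comp e₁.toLinearEquiv.injective)

end Tor

/-- If `M` is weakly Laskerian and `N` is finitely generated, then
`Tor^R_i(N, M)` is weakly Laskerian for all `i ≥ 0`. -/
theorem weaklyLaskerian_tor
    {R : Type} [CommRing R] [IsNoetherianRing R]
    {M N : Type} [AddCommGroup M] [Module R M] [AddCommGroup N] [Module R N]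
    (hM : WeaklyLaskerian R M) (hN : Module.Finite R N) (i : ℕ) :
    WeaklyLaskerian R
      (((Tor (ModuleCat.{0} R) i).obj (ModuleCat.of R N)).obj (ModuleCat.of R M)) := by
  induction i generalizing N with
  | zero =>
    have e := (Functor.leftDerivedZeroIsoSelf ((tensoringLeft (ModuleCat.{0} R)).obj (.of R N))).app
      (ModuleCat.of R M)
    exact (hM.tensorProduct N).of_equiv e.toLinearEquiv.symm
  | succ n ih =>
    obtain ⟨F, _, _, _, _, f, hf⟩ := Module.exists_finite_presentation R N
    obtain ⟨g, hg⟩ :=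
      exists_injective_Tor_succ_of_flat (LinearMap.shortExact_shortComplexKer hf) (.of R M) n
    exact (ih inferInstance).of_injective_s4 g hg
end

section
/- If every quotient module of an R-module M has finite Goldie dimension, then M is weakly Laskerian. -/
/-!
Over a Noetherian ring every associated prime `p` of `Q` is the full annihilator of some `x ∈ Q`
(Mathlib only asks for the radical of an annihilator), so `R ∙ x ≅ R ⧸ p`. Cyclic submodules whose
annihilators are pairwise distinct primes are independent: in a relation `∑ yᵢ = 0` with
`yᵢ ∈ R ∙ xᵢ`, pick `j` with `pⱼ` maximal among the finitely many `pᵢ`; prime avoidance gives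
`a ∈ pⱼ` outside every other `pᵢ`, and multiplying by `a` kills `yⱼ` and yields a shorter relation,
from which the remaining terms vanish because `a` acts injectively on each `R ∙ xᵢ ≅ R ⧸ pᵢ`.
Infinitely many associated primes of a quotient would therefore give an infinite direct sum of
nonzero submodules of it.
-/
/-- An `R`-module `M` has finite Goldie dimension if it does not contain an
infinite direct sum of nonzero submodules. -/
def FiniteGoldieDimension (R M : Type*) [CommRing R] [AddCommGroup M]
    [Module R M] : Prop :=
  ¬ ∃ f : ℕ → Submodule R M, (∀ n, f n ≠ ⊥) ∧ iSupIndep f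

open Submodule

theorem Ideal.exists_mem_forall_notMem_of_forall_not_le {R ι : Type*} [CommRing R]
    {s : Finset ι} {p : ι → Ideal R} (hp : ∀ i ∈ s, (p i).IsPrime) {I : Ideal R}
    (hI : ∀ i ∈ s, ¬ I ≤ p i) : ∃ a ∈ I, ∀ i ∈ s, a ∉ p i := by
  rcases s.eq_empty_or_nonempty with rfl | ⟨i₀, -⟩
  · exact ⟨0, I.zero_mem, by simp⟩
  have hnot : ¬ (I : Set R) ⊆ ⋃ i ∈ (s : Set ι), (p i : Set R) := by
    rw [Ideal.subset_union_prime i₀ i₀ fun i hi _ _ ↦ hp i hi]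
    rintro ⟨i, hi, hIi⟩
    exact hI i hi hIi
  obtain ⟨a, ha, hnotMem⟩ := Set.not_subset.mp hnot
  exact ⟨a, ha, fun i hi hai ↦ hnotMem (Set.mem_biUnion hi hai)⟩

section

variable {R Q : Type*} [CommRing R] [AddCommGroup Q] [Module R Q]

theorem Submodule.ne_zero_of_isPrime_colon_bot {x : Q}
    (hx : (colon (⊥ : Submodule R Q) {x}).IsPrime) : x ≠ 0 := by
  rintro rfl
  exact hx.ne_top (by ext; simp [mem_colon_singleton])

theorem Submodule.smul_eq_zero_of_mem_colon_bot {x y : Q} {a : R}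
    (ha : a ∈ colon (⊥ : Submodule R Q) {x}) (hy : y ∈ R ∙ x) : a • y = 0 := by
  obtain ⟨b, rfl⟩ := mem_span_singleton.mp hy
  rw [smul_comm, (mem_bot R).mp (mem_colon_singleton.mp ha), smul_zero]

theorem Submodule.eq_zero_of_smul_eq_zero_of_notMem_colon_bot {x y : Q} {a : R}
    (hx : (colon (⊥ : Submodule R Q) {x}).IsPrime) (hy : y ∈ R ∙ x)
    (ha : a ∉ colon (⊥ : Submodule R Q) {x}) (hay : a • y = 0) : y = 0 := by
  obtain ⟨b, rfl⟩ := mem_span_singleton.mp hy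
  have hab : a * b ∈ colon (⊥ : Submodule R Q) {x} := by
    rwa [mem_colon_singleton, mem_bot, mul_smul]
  exact (mem_bot R).mp (mem_colon_singleton.mp ((hx.mem_or_mem hab).resolve_left ha))

theorem iSupIndep_span_singleton_of_isPrime_colon_bot {ι : Type*} {x : ι → Q}
    (hprime : ∀ i, (colon (⊥ : Submodule R Q) {x i}).IsPrime)
    (hinj : Function.Injective fun i ↦ colon (⊥ : Submodule R Q) {x i}) :
    iSupIndep fun i ↦ R ∙ x i := by
  classical
  rw [iSupIndep_iff_finsetSum_eq_zero_imp_eq_zero]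
  intro s
  induction s using Finset.strongInduction with
  | H s ih =>
  intro v hv hsum
  rcases s.eq_empty_or_nonempty with rfl | hs
  · simp
  obtain ⟨j, hjs, hjmax⟩ := s.exists_maximalFor (fun i ↦ colon (⊥ : Submodule R Q) {x i}) hs
  have hnotLe : ∀ i ∈ s.erase j, ¬ colon ⊥ {x j} ≤ colon ⊥ {x i} := fun i hi hle ↦
    Finset.ne_of_mem_erase hi (hinj (le_antisymm (hjmax (Finset.mem_of_mem_erase hi) hle) hle))
  obtain ⟨a, haj, hai⟩ :=
    Ideal.exists_mem_forall_notMem_of_forall_not_le (fun i _ ↦ hprime i) hnotLe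
  have hsum_erase : ∑ i ∈ s.erase j, a • v i = 0 := by
    have := congrArg (a • ·) hsum
    simp only [smul_zero, Finset.smul_sum] at this
    rwa [← Finset.add_sum_erase s _ hjs, smul_eq_zero_of_mem_colon_bot haj (hv j hjs),
      zero_add] at this
  have hzero_erase : ∀ i ∈ s.erase j, v i = 0 := fun i hi ↦
    eq_zero_of_smul_eq_zero_of_notMem_colon_bot (hprime i) (hv i (Finset.mem_of_mem_erase hi))
      (hai i hi) (ih _ (Finset.erase_ssubset hjs) (a • v ·)
        (fun k hk ↦ smul_mem _ a (hv k (Finset.mem_of_mem_erase hk))) hsum_erase i hi)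
  have hvj : v j = 0 := by
    rwa [← Finset.add_sum_erase s v hjs, Finset.sum_eq_zero hzero_erase, add_zero] at hsum
  intro i hi
  by_cases hij : i = j
  · rwa [hij]
  · exact hzero_erase i (Finset.mem_erase.mpr ⟨hij, hi⟩)

theorem not_finiteGoldieDimension_of_infinite_associatedPrimes [IsNoetherianRing R]
    (h : (associatedPrimes R Q).Infinite) : ¬ FiniteGoldieDimension R Q := by
  let e := h.natEmbedding
  choose x hx using fun n ↦ (isAssociatedPrime_iff.mp (e n).2).2
  have hprime : ∀ n, (colon (⊥ : Submodule R Q) {x n}).IsPrime := fun n ↦ hx n ▸ (e n).2.1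
  refine not_not_intro ⟨fun n ↦ R ∙ x n, fun n ↦ ?_,
    iSupIndep_span_singleton_of_isPrime_colon_bot hprime fun m n hmn ↦ ?_⟩
  · exact span_singleton_eq_bot.not.mpr (ne_zero_of_isPrime_colon_bot (hprime n))
  · exact e.injective (Subtype.ext ((hx m).trans (hmn.trans (hx n).symm)))

end

/-- If every quotient of `M` has finite Goldie dimension, then `M` is weakly
Laskerian. -/
theorem weaklyLaskerian_of_quotients_finiteGoldieDimension
    {R M : Type*} [CommRing R] [IsNoetherianRing R]
    [AddCommGroup M] [Module R M]
    (h : ∀ N : Submodule R M, FiniteGoldieDimension R (M ⧸ N)) :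
    WeaklyLaskerian R M := fun N ↦
  Set.not_infinite.mp fun hinf ↦ not_finiteGoldieDimension_of_infinite_associatedPrimes hinf (h N)
end

section
/- If an R-module M has a finitely generated submodule S such that M/S is Artinian, then M is weakly Laskerian. -/
/-!
A finitely generated module over a Noetherian ring has finitely many associated primes, and so
does an Artinian one: its associated primes `p` are maximal (`R ⧸ p` embeds into it, hence is an
Artinian domain), and elements `x_p` with annihilator `p` span an independent family of
submodules, which must be finite. If `S ≤ M` is finitely generated with `M ⧸ S` Artinian, then
`Ass M ⊆ Ass S ∪ Ass (M ⧸ S)`, and this hypothesis passes to every quotient `M ⧸ N` through the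
image of `S`.
-/

section

open Submodule

variable {R M : Type*} [CommRing R] [AddCommGroup M] [Module R M]

theorem Submodule.exists_annihilator_le_of_mem_iSup {ι : Type*} {N : ι → Submodule R M}
    {p : Ideal R} (hp : p.IsPrime) {y : M} (hy : y ∈ ⨆ i, N i)
    (hyp : (R ∙ y).annihilator ≤ p) : ∃ i, (N i).annihilator ≤ p := by
  obtain ⟨s, hs⟩ := mem_iSup_iff_exists_finset.mp hy
  have hinf : s.inf (fun i ↦ (N i).annihilator) ≤ p :=
    calc s.inf (fun i ↦ (N i).annihilator)
        = (⨆ i ∈ s, N i).annihilator := by simp only [Finset.inf_eq_iInf, annihilator_iSup]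
      _ ≤ (R ∙ y).annihilator := annihilator_mono (span_singleton_le_iff_mem _ _ |>.mpr hs)
      _ ≤ p := hyp
  obtain ⟨i, -, hi⟩ := hp.inf_le'.mp hinf
  exact ⟨i, hi⟩

theorem iSupIndep_span_singleton_of_isMaximal {ι : Type*} {x : ι → M}
    (hmax : ∀ i, (R ∙ x i).annihilator.IsMaximal)
    (hinj : Function.Injective fun i ↦ (R ∙ x i).annihilator) :
    iSupIndep fun i ↦ R ∙ x i := by
  intro i
  rw [disjoint_def]
  intro y hyi hy
  by_contra hy0
  -- `R ∙ x i ≅ R ⧸ p_i` is simple, so every nonzero `y` in it has annihilator exactly `p_i`.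
  have hann : (R ∙ x i).annihilator = (R ∙ y).annihilator :=
    (hmax i).eq_of_le (by rwa [Ne, annihilator_eq_top_iff, span_singleton_eq_bot])
      (annihilator_mono ((span_singleton_le_iff_mem _ _).mpr hyi))
  rw [iSup_subtype'] at hy
  obtain ⟨⟨j, hji⟩, hj⟩ := exists_annihilator_le_of_mem_iSup (hmax i).isPrime hy hann.ge
  exact hji (hinj ((hmax j).eq_of_le (hmax i).ne_top hj))

theorem IsAssociatedPrime.isMaximal_of_isArtinian [IsNoetherianRing R] [IsArtinian R M]
    {p : Ideal R} (h : IsAssociatedPrime p M) : p.IsMaximal := by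
  obtain ⟨hp, f, hf⟩ := (isAssociatedPrime_iff_exists_injective_linearMap p M).mp h
  have : IsArtinianRing (R ⧸ p) := isArtinian_of_tower R (isArtinian_of_injective f hf)
  exact Ideal.Quotient.maximal_of_isField p (IsArtinianRing.isField_of_isDomain _)

theorem associatedPrimes.finite_of_isArtinian [IsNoetherianRing R] [IsArtinian R M] :
    (associatedPrimes R M).Finite := by
  have hwitness (p : associatedPrimes R M) : ∃ x : M, (p : Ideal R) = (R ∙ x).annihilator := by
    obtain ⟨-, x, hx⟩ := isAssociatedPrime_iff.mp p.2
    exact ⟨x, hx.trans bot_colon'⟩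
  choose x hx using hwitness
  have hmax (p : associatedPrimes R M) : (R ∙ x p).annihilator.IsMaximal :=
    hx p ▸ IsAssociatedPrime.isMaximal_of_isArtinian p.2
  have hind : iSupIndep fun p ↦ R ∙ x p :=
    iSupIndep_span_singleton_of_isMaximal hmax fun p q hpq ↦
      Subtype.ext ((hx p).trans (hpq.trans (hx q).symm))
  have hne_bot (p : associatedPrimes R M) : R ∙ x p ≠ ⊥ := by
    rw [Ne, ← annihilator_eq_top_iff]
    exact (hmax p).ne_top
  exact Set.finite_coe_iff.mp (WellFoundedLT.finite_of_iSupIndep hind hne_bot)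

theorem associatedPrimes.finite_of_fg_of_isArtinian_quotient [IsNoetherianRing R]
    {S : Submodule R M} (hS : S.FG) [IsArtinian R (M ⧸ S)] :
    (associatedPrimes R M).Finite := by
  have : Module.Finite R S := Module.Finite.iff_fg.mpr hS
  exact ((associatedPrimes.finite R S).union associatedPrimes.finite_of_isArtinian).subset
    (associatedPrimes.subset_union_of_exact S.injective_subtype (LinearMap.exact_subtype_mkQ S))

theorem Submodule.isArtinian_quotient_map_mkQ (S N : Submodule R M) [IsArtinian R (M ⧸ S)] :
    IsArtinian R ((M ⧸ N) ⧸ S.map N.mkQ) :=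
  isArtinian_of_surjective (M ⧸ S) (S.mapQ _ N.mkQ (le_comap_map N.mkQ S))
    (Function.Surjective.of_comp (g := S.mkQ) ((mkQ_surjective _).comp N.mkQ_surjective))

end

/-- If `M` has a finitely generated submodule `S` with `M/S` Artinian, then `M`
is weakly Laskerian. -/
theorem weaklyLaskerian_of_fg_submodule_artinian_quotient
    {R M : Type*} [CommRing R] [IsNoetherianRing R]
    [AddCommGroup M] [Module R M] (S : Submodule R M)
    (hS : S.FG) (hQ : IsArtinian R (M ⧸ S)) :
    WeaklyLaskerian R M := by
  intro N
  have := S.isArtinian_quotient_map_mkQ N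
  exact associatedPrimes.finite_of_fg_of_isArtinian_quotient (hS.map N.mkQ)
end

section
/- If N is an a-cofinite R-module, then Ass_R(N) = Ass_R(Hom_R(R/a, N)), and in particular Ass_R(N) is finite. -/
/-!
Evaluation at `1` embeds `Hom(R/a, N)` into `N` with image the elements killed by `a`. An
associated prime `p = ann(x)` of `N` lies in `Supp N ⊆ V(a)`, so `a ⊆ ann(x)` and `x` comes from
`Hom(R/a, N)` with the same annihilator; hence both modules have the same associated primes. As
`Hom(-, N)` is left exact, `Hom(R/a, N) ≅ Ext⁰(R/a, N)` is finitely generated, so over a Noetherian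
ring it has only finitely many associated primes.
-/

open CategoryTheory

/-- An `R`-module `N` is `a`-cofinite if `Supp N ⊆ V(a)` and all the modules
`Ext^i_R(R/a, N)` are finitely generated. -/
def IsCofinite {R : Type} [CommRing R] (a : Ideal R)
    (N : Type) [AddCommGroup N] [Module R N] : Prop :=
  Module.support R N ⊆ PrimeSpectrum.zeroLocus (a : Set R) ∧
    ∀ i : ℕ, Module.Finite R
      (((Ext R (ModuleCat.{0} R) i).obj (Opposite.op (ModuleCat.of R (R ⧸ a)))).obj
        (ModuleCat.of R N))

section AssociatedPrimes

open Submodule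

variable {R M M' : Type*} [CommRing R] [AddCommGroup M] [Module R M] [AddCommGroup M']
  [Module R M']

theorem Submodule.colon_bot_singleton_map_of_injective {f : M →ₗ[R] M'}
    (hf : Function.Injective f) (x : M) :
    (⊥ : Submodule R M').colon {f x} = (⊥ : Submodule R M).colon {x} := by
  ext r
  simp_rw [mem_colon_singleton, mem_bot, ← map_smul, map_eq_zero_iff f hf]

theorem associatedPrimes_eq_of_injective [IsNoetherianRing R] {f : M →ₗ[R] M'}
    (hf : Function.Injective f)
    (hrange : ∀ x : M', ((⊥ : Submodule R M').colon {x}).IsPrime → x ∈ LinearMap.range f) :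
    associatedPrimes R M = associatedPrimes R M' := by
  refine (associatedPrimes.subset_of_injective hf).antisymm fun p hp ↦ ?_
  obtain ⟨hprime, x, rfl⟩ := isAssociatedPrime_iff.mp hp
  obtain ⟨y, rfl⟩ := hrange _ hprime
  exact isAssociatedPrime_iff.mpr ⟨hprime, y, colon_bot_singleton_map_of_injective hf y⟩

theorem le_colon_bot_singleton_of_support_subset_zeroLocus {a : Ideal R}
    (hM : Module.support R M ⊆ PrimeSpectrum.zeroLocus (a : Set R)) {x : M}
    (hx : ((⊥ : Submodule R M).colon {x}).IsPrime) :
    a ≤ (⊥ : Submodule R M).colon {x} := by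
  have hsupp : (⟨_, hx⟩ : PrimeSpectrum R) ∈ Module.support R M :=
    Module.mem_support_iff'.mpr ⟨x, fun r hr ↦ by simpa [mem_colon_singleton] using hr⟩
  exact (PrimeSpectrum.mem_zeroLocus _ _).mp (hM hsupp)

end AssociatedPrimes

section QuotientHom

open Submodule

variable {R N : Type*} [CommRing R] [AddCommGroup N] [Module R N] (a : Ideal R)

theorem injective_applyₗ_one_quotient :
    Function.Injective (LinearMap.applyₗ (R := R) (M₂ := N) (1 : R ⧸ a)) := by
  intro φ ψ h
  exact linearMap_qext _ (LinearMap.ext_ring h)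

theorem mem_range_applyₗ_one_quotient {x : N} (hx : a ≤ (⊥ : Submodule R N).colon {x}) :
    x ∈ LinearMap.range (LinearMap.applyₗ (R := R) (M₂ := N) (1 : R ⧸ a)) := by
  have hker : a ≤ LinearMap.ker (LinearMap.toSpanSingleton R N x) := fun r hr ↦ by
    simpa [mem_colon_singleton] using hx hr
  exact ⟨liftQ a _ hker, (liftQ_apply a _ (h := hker) (1 : R)).trans (one_smul R x)⟩

theorem associatedPrimes_quotient_linearMap_eq [IsNoetherianRing R]
    (hN : Module.support R N ⊆ PrimeSpectrum.zeroLocus (a : Set R)) :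
    associatedPrimes R ((R ⧸ a) →ₗ[R] N) = associatedPrimes R N :=
  associatedPrimes_eq_of_injective (injective_applyₗ_one_quotient a) fun _ hx ↦
    mem_range_applyₗ_one_quotient a (le_colon_bot_singleton_of_support_subset_zeroLocus hN hx)

end QuotientHom

section ExtZero

open Limits Opposite

universe w v u

namespace CategoryTheory

instance Linear.preservesLimits_linearYoneda_obj (R : Type w) [Ring R] [Small.{v} R]
    {C : Type u} [Category.{v} C] [Preadditive C] [Linear R C] (Y : C) :
    PreservesLimits ((linearYoneda R C).obj Y) :=
  have : PreservesLimits ((linearYoneda R C).obj Y ⋙ forget (ModuleCat.{v} R)) :=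
    inferInstanceAs (PreservesLimits (yoneda.obj Y))
  preservesLimits_of_reflects_of_preserves _ (forget (ModuleCat.{v} R))

variable {R : Type w} [Ring R] [Small.{v} R] {C : Type u} [Category.{v} C] [Abelian C]
  [Linear R C] [EnoughProjectives C]

noncomputable def extZeroIsoHom (X Y : C) :
    ((Ext R C 0).obj (op X)).obj Y ≅ ModuleCat.of R (X ⟶ Y) :=
  have := preservesFiniteColimits_rightOp ((linearYoneda R C).obj Y)
  (((linearYoneda R C).obj Y).rightOp.leftDerivedZeroIsoSelf.app X).unop.symm

end CategoryTheory

theorem Module.Finite.linearMap_of_ext_zero {R : Type v} [CommRing R] (M N : Type v)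
    [AddCommGroup M] [Module R M] [AddCommGroup N] [Module R N]
    [Module.Finite R
      (((Ext R (ModuleCat.{v} R) 0).obj (op (ModuleCat.of R M))).obj (ModuleCat.of R N))] :
    Module.Finite R (M →ₗ[R] N) :=
  .equiv ((extZeroIsoHom (ModuleCat.of R M) (ModuleCat.of R N)).toLinearEquiv ≪≫ₗ
    ModuleCat.homLinearEquiv (S := R))

end ExtZero

/-- If `N` is `a`-cofinite, then `Ass N = Ass Hom(R/a, N)`; in particular the
set of associated primes of `N` is finite. -/
theorem associatedPrimes_of_cofinite
    {R : Type} [CommRing R] [IsNoetherianRing R] (a : Ideal R)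
    (N : Type) [AddCommGroup N] [Module R N] (h : IsCofinite a N) :
    associatedPrimes R N = associatedPrimes R ((R ⧸ a) →ₗ[R] N) ∧
      (associatedPrimes R N).Finite := by
  have hAss := associatedPrimes_quotient_linearMap_eq a h.1
  have := h.2 0
  have : Module.Finite R ((R ⧸ a) →ₗ[R] N) := .linearMap_of_ext_zero _ _
  exact ⟨hAss.symm, hAss ▸ associatedPrimes.finite R _⟩
end
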